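/- The runoff combination plurality+Borda is not monotonic. Concretely, let C = {a,b,c} with tie-breaking order c ≻ a ≻ b, and let P be the profile with 6 votes b≻c≻a, 4 votes c≻a≻b, 3 votes a≻b≻c and 3 votes a≻c≻b. Then plurality+Borda elects c on P (the plurality winner is a, the Borda winner is c, and c beats a in the runoff), but if P′ is obtained from P by replacing one vote a≻c≻b by c≻a≻b (which moves the winner c up while keeping the relative order of a and b unchanged), then plurality+Borda elects b on P′. Hence there are a rule, a winner w, a profile P with winner w, and a profile P′ obtained from P by raising w in one vote, on which the winner changes. -/

import Mathlib

/-
`plurality + Borda` is not monotonic: concrete counterexample on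
candidates {a, b, c} with tie-breaking order c ≻ a ≻ b.
Votes are duplicate-free lists of all candidates (earlier = more preferred).
-/

inductive Cand : Type
  | a | b | c
  deriving DecidableEq

instance : Fintype Cand where
  elems := {Cand.a, Cand.b, Cand.c}
  complete := by intro x; cases x <;> simp

open Cand

/-- `N P x y`: the number of votes in `P` ranking `x` above `y`. -/
def pairN (P : List (List Cand)) (x y : Cand) : ℕ :=
  (P.filter fun v => v.idxOf x < v.idxOf y).length

/-- Plurality score: the number of votes ranking `e` first. -/
def pluralityScore (P : List (List Cand)) (e : Cand) : ℕ :=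
  (P.filter fun v => v.head? = some e).length

/-- Borda score: each vote awards `m - r` points to the candidate it ranks in
`r`-th place (here `m = 3`). -/
def bordaScore (P : List (List Cand)) (e : Cand) : ℕ :=
  (P.map fun v => 3 - (v.idxOf e + 1)).sum

/-- The `T`-greatest candidate among the maximisers of `f`. -/
def argmaxT (T : LinearOrder Cand) (f : Cand → ℕ) : Cand :=
  @Finset.max' Cand T (Finset.univ.filter fun e => ∀ z, f z ≤ f e) (by
    obtain ⟨w, hw, hm⟩ := Finset.exists_max_image Finset.univ f ⟨Cand.a, Finset.mem_univ _⟩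
    exact ⟨w, Finset.mem_filter.2 ⟨Finset.mem_univ _, fun z => hm z (Finset.mem_univ _)⟩⟩)

def pluralityWinner (T : LinearOrder Cand) (P : List (List Cand)) : Cand :=
  argmaxT T (pluralityScore P)

def bordaWinner (T : LinearOrder Cand) (P : List (List Cand)) : Cand :=
  argmaxT T (bordaScore P)

/-- Run-off combination `X + Y`: the common winner if `X` and `Y` agree;
otherwise the pairwise-majority winner between the two winners, with the
`T`-greater candidate winning a tied run-off. -/
def runoffWinner (T : LinearOrder Cand) (X Y : List (List Cand) → Cand)
    (P : List (List Cand)) : Cand :=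
  let x := X P
  let y := Y P
  if x = y then x
  else if pairN P y x < pairN P x y then x
  else if pairN P x y < pairN P y x then y
  else if T.lt x y then y else x

/-- Tie-breaking priority realising the order c ≻ a ≻ b. -/
def prio : Cand → ℕ
  | .a => 1
  | .b => 0
  | .c => 2

/-- The tie-breaking order c ≻ a ≻ b. -/
def Tcab : LinearOrder Cand := LinearOrder.lift' prio (by decide)

/-- The profile `P`: 6 votes b≻c≻a, 4 votes c≻a≻b, 3 votes a≻b≻c, 3 votes a≻c≻b. -/
def P6 : List (List Cand) :=
  List.replicate 6 [b, c, a] ++ List.replicate 4 [c, a, b] ++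
    List.replicate 3 [a, b, c] ++ List.replicate 3 [a, c, b]

/-- The profile `P′`: `P` with one vote a≻c≻b replaced by c≻a≻b (the winner `c`
is moved up while the relative order of `a` and `b` is unchanged). -/
def P6' : List (List Cand) :=
  List.replicate 6 [b, c, a] ++ List.replicate 4 [c, a, b] ++
    List.replicate 3 [a, b, c] ++ List.replicate 2 [a, c, b] ++ [[c, a, b]]

/-
On `P` the plurality winner `a` meets the Borda winner `c` in the run-off and loses 6 : 10.
Raising `c` above `a` in one vote costs `a` a first place, so `b` becomes the plurality winner
while `c` stays the Borda winner; but `b` beats `c` 9 : 7 pairwise, and `c` loses the run-off.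
-/

theorem argmaxT_eq {T : LinearOrder Cand} {f : Cand → ℕ} {w : Cand}
    (hmax : ∀ z, f z ≤ f w) (htie : ∀ e, f e = f w → T.le e w) : argmaxT T f = w := by
  let _ := T
  have hmem := Finset.max'_mem (Finset.univ.filter fun e => ∀ z, f z ≤ f e) ⟨w, by simpa using hmax⟩
  rw [Finset.mem_filter] at hmem
  exact le_antisymm (htie _ (le_antisymm (hmax _) (hmem.2 w)))
    (Finset.le_max' _ w (by simpa using hmax))

theorem argmaxT_eq_of_forall_lt {T : LinearOrder Cand} {f : Cand → ℕ} {w : Cand}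
    (hlt : ∀ z, z ≠ w → f z < f w) : argmaxT T f = w := by
  have hmax : ∀ z, f z ≤ f w := fun z => by
    rcases eq_or_ne z w with rfl | hz
    exacts [le_rfl, (hlt z hz).le]
  refine argmaxT_eq hmax fun e he => ?_
  obtain rfl : e = w := by_contra fun hne => (hlt e hne).ne he
  exact T.le_refl e

section Runoff

variable {T : LinearOrder Cand} {X Y : List (List Cand) → Cand} {P : List (List Cand)}

theorem runoffWinner_eq_left (hne : X P ≠ Y P)
    (hmaj : pairN P (Y P) (X P) < pairN P (X P) (Y P)) : runoffWinner T X Y P = X P := by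
  simp [runoffWinner, hne, hmaj]

theorem runoffWinner_eq_right (hne : X P ≠ Y P)
    (hmaj : pairN P (X P) (Y P) < pairN P (Y P) (X P)) : runoffWinner T X Y P = Y P := by
  simp [runoffWinner, hne, hmaj, hmaj.not_gt]

end Runoff

theorem Tcab_le_iff {x y : Cand} : Tcab.le x y ↔ prio x ≤ prio y := Iff.rfl

theorem pluralityScore_P6 :
    pluralityScore P6 a = 6 ∧ pluralityScore P6 b = 6 ∧ pluralityScore P6 c = 4 := by decide

theorem bordaScore_P6 :
    bordaScore P6 a = 16 ∧ bordaScore P6 b = 15 ∧ bordaScore P6 c = 17 := by decide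

theorem pluralityScore_P6' :
    pluralityScore P6' a = 5 ∧ pluralityScore P6' b = 6 ∧ pluralityScore P6' c = 5 := by decide

theorem bordaScore_P6' :
    bordaScore P6' a = 15 ∧ bordaScore P6' b = 15 ∧ bordaScore P6' c = 18 := by decide

theorem pairN_P6 : pairN P6 a c = 6 ∧ pairN P6 c a = 10 := by decide

theorem pairN_P6' : pairN P6' b c = 9 ∧ pairN P6' c b = 7 := by decide

theorem pluralityWinner_P6 : pluralityWinner Tcab P6 = a := by
  obtain ⟨ha, hb, hc⟩ := pluralityScore_P6
  refine argmaxT_eq (fun z => ?_) (fun e he => ?_)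
  · cases z <;> simp [ha, hb, hc]
  · cases e <;> simp_all [Tcab_le_iff, prio]

theorem bordaWinner_P6 : bordaWinner Tcab P6 = c := by
  obtain ⟨ha, hb, hc⟩ := bordaScore_P6
  exact argmaxT_eq_of_forall_lt fun z hz => by cases z <;> simp_all

theorem pluralityWinner_P6' : pluralityWinner Tcab P6' = b := by
  obtain ⟨ha, hb, hc⟩ := pluralityScore_P6'
  exact argmaxT_eq_of_forall_lt fun z hz => by cases z <;> simp_all

theorem bordaWinner_P6' : bordaWinner Tcab P6' = c := by
  obtain ⟨ha, hb, hc⟩ := bordaScore_P6'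
  exact argmaxT_eq_of_forall_lt fun z hz => by cases z <;> simp_all

/-- `plurality + Borda` is not monotonic: on `P` the plurality winner is `a`,
the Borda winner is `c`, and `c` wins the run-off, so `plurality + Borda`
elects `c`; but on `P′`, obtained from `P` by raising the winner `c` in a
single vote, `plurality + Borda` elects `b`. -/
theorem plurality_borda_not_monotonic :
    pluralityWinner Tcab P6 = Cand.a ∧
    bordaWinner Tcab P6 = Cand.c ∧
    runoffWinner Tcab (pluralityWinner Tcab) (bordaWinner Tcab) P6 = Cand.c ∧
    runoffWinner Tcab (pluralityWinner Tcab) (bordaWinner Tcab) P6' = Cand.b := by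
  refine ⟨pluralityWinner_P6, bordaWinner_P6, ?_, ?_⟩
  · rw [runoffWinner_eq_right] <;> simp [pluralityWinner_P6, bordaWinner_P6, pairN_P6]
  · rw [runoffWinner_eq_left] <;> simp [pluralityWinner_P6', bordaWinner_P6', pairN_P6']
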